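/- arXiv:1009.1246 — 6 statements merged into one kernel-verified Lean document; each statement's English description precedes it below -/
import Mathlib

section
/- Let T ≥ 1, let n ≥ 1, and let v₁, …, v_n ∈ ℝ^{1,T} with ⟨v_i, v_i⟩ < 0 for every i. Then the number of ordered pairs (i,j) with i ≠ j and ⟨v_i, v_j⟩ ≠ 0 is at least n²/T − n. -/
open scoped Classical

/-- The Minkowski bilinear form of signature `(1, T)` on `ℝ^{T+1}`:
`⟨x, y⟩ = x₀ y₀ - ∑_{i=1}^{T} x_i y_i`. -/
noncomputable def mink (T : ℕ) (x y : Fin (T + 1) → ℝ) : ℝ :=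
  x 0 * y 0 - ∑ i : Fin T, x i.succ * y i.succ

lemma no_orth_family {ι : Type*} [Fintype ι] (T : ℕ) (hcard : T < Fintype.card ι)
    (w : ι → Fin (T + 1) → ℝ) (hneg : ∀ i, mink T (w i) (w i) < 0)
    (horth : ∀ i j, i ≠ j → mink T (w i) (w j) = 0) : False := by
  set u : ι → Fin T → ℝ := fun i k => w i k.succ with hu
  set t : ι → ℝ := fun i => w i 0 with ht
  have hdep : ¬ LinearIndependent ℝ u := by
    intro h
    have := h.fintype_card_le_finrank
    rw [Module.finrank_fin_fun] at this
    omega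
  obtain ⟨g, hg, i₀, hi₀⟩ := Fintype.not_linearIndependent_iff.mp hdep
  have h1 : ∀ k : Fin T, ∑ i, g i * u i k = 0 := by
    intro k
    have := congrFun hg k
    simpa [Finset.sum_apply] using this
  have hD : ∀ i j, (∑ k : Fin T, u i k * u j k) = t i * t j - mink T (w i) (w j) := by
    intro i j; simp [mink, hu, ht]
  have h2 : ∑ i, ∑ j, g i * g j * (∑ k : Fin T, u i k * u j k) = 0 := by
    have step : ∀ i, ∑ j, g i * g j * (∑ k : Fin T, u i k * u j k)
        = g i * ∑ k : Fin T, u i k * (∑ j, g j * u j k) := by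
      intro i
      calc ∑ j, g i * g j * ∑ k : Fin T, u i k * u j k
          = ∑ j, ∑ k : Fin T, g i * (u i k * (g j * u j k)) := by
            refine Finset.sum_congr rfl fun j _ => ?_
            rw [Finset.mul_sum]
            exact Finset.sum_congr rfl fun k _ => by ring
        _ = ∑ k : Fin T, ∑ j, g i * (u i k * (g j * u j k)) := Finset.sum_comm
        _ = g i * ∑ k : Fin T, u i k * (∑ j, g j * u j k) := by
            rw [Finset.mul_sum]
            refine Finset.sum_congr rfl fun k _ => ?_
            rw [Finset.mul_sum, Finset.mul_sum]
    simp only [step, h1, mul_zero, Finset.sum_const_zero]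
  have h3 : ∑ i, ∑ j, g i * g j * (t i * t j)
      - ∑ i, ∑ j, g i * g j * mink T (w i) (w j) = 0 := by
    rw [← Finset.sum_sub_distrib]
    rw [← h2]
    refine Finset.sum_congr rfl fun i _ => ?_
    rw [← Finset.sum_sub_distrib]
    refine Finset.sum_congr rfl fun j _ => ?_
    rw [hD]; ring
  have h4 : ∑ i, ∑ j, g i * g j * mink T (w i) (w j)
      = ∑ i, g i * g i * mink T (w i) (w i) := by
    refine Finset.sum_congr rfl fun i _ => ?_
    rw [Finset.sum_eq_single i]
    · intro j _ hji; rw [horth i j (Ne.symm hji), mul_zero]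
    · intro h; exact absurd (Finset.mem_univ i) h
  have h5 : ∑ i, ∑ j, g i * g j * (t i * t j) = (∑ i, g i * t i) ^ 2 := by
    rw [sq, Finset.sum_mul_sum]
    refine Finset.sum_congr rfl fun i _ => Finset.sum_congr rfl fun j _ => by ring
  have hpos : (0:ℝ) ≤ ∑ i, g i * g i * mink T (w i) (w i) := by
    rw [← h4]
    have := h3
    nlinarith [sq_nonneg (∑ i, g i * t i), h5]
  have hltz : ∑ i, g i * g i * mink T (w i) (w i) < 0 := by
    have : ∑ i, g i * g i * mink T (w i) (w i) < ∑ _i : ι, (0:ℝ) := by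
      refine Finset.sum_lt_sum (fun i _ => ?_) ⟨i₀, Finset.mem_univ i₀, ?_⟩
      · nlinarith [mul_self_nonneg (g i), (hneg i)]
      · have : 0 < g i₀ * g i₀ := mul_self_pos.mpr hi₀
        nlinarith [hneg i₀]
    simpa using this
  linarith

lemma turan_count {α : Type*} [DecidableEq α] (R : α → α → Prop)
    (hsym : ∀ a b, R a b → R b a) (hirr : ∀ a, ¬ R a a) :
    ∀ (r : ℕ) (s : Finset α),
      (∀ t : Finset α, t ⊆ s → (∀ i ∈ t, ∀ j ∈ t, i ≠ j → R i j) → t.card ≤ r) →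
      r * ((s ×ˢ s).filter fun p => R p.1 p.2).card ≤ (r - 1) * s.card ^ 2 := by
  intro r
  induction r with
  | zero => intro s _; simp
  | succ r IH =>
    intro s
    induction s using Finset.strongInduction with
    | _ s ih =>
    intro hbound
    by_cases hA : ∃ A : Finset α, A ⊆ s ∧ A.card = r + 1 ∧
        ∀ i ∈ A, ∀ j ∈ A, i ≠ j → R i j
    · obtain ⟨A, hAs, hAcard, hAcl⟩ := hA
      set B := s \ A with hB
      have hAne : A.Nonempty := Finset.card_pos.mp (by omega)
      have hBss : B ⊂ s := Finset.sdiff_ssubset hAs hAne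
      have hBs : B ⊆ s := hBss.subset
      have hscard : s.card = B.card + (r + 1) := by
        have := Finset.card_sdiff_add_card_eq_card hAs
        rw [← hB] at this
        omega
      -- cross bound
      have hcross : ∀ b ∈ B, (A.filter fun a => R a b).card ≤ r := by
        intro b hb
        by_contra h
        push_neg at h
        have hfc : A.card ≤ (A.filter fun a => R a b).card := by omega
        have hall : (A.filter fun a => R a b) = A :=
          Finset.eq_of_subset_of_card_le (Finset.filter_subset _ _) hfc
        have hbA : b ∉ A := (Finset.mem_sdiff.mp hb).2
        have hclique : ∀ i ∈ insert b A, ∀ j ∈ insert b A, i ≠ j → R i j := by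
          intro i hi j hj hij
          rcases Finset.mem_insert.mp hi with rfl | hi' <;>
            rcases Finset.mem_insert.mp hj with rfl | hj'
          · exact absurd rfl hij
          · rw [← hall] at hj'
            exact hsym _ _ (Finset.mem_filter.mp hj').2
          · rw [← hall] at hi'
            exact (Finset.mem_filter.mp hi').2
          · exact hAcl i hi' j hj' hij
        have hins : insert b A ⊆ s := by
          intro x hx
          rcases Finset.mem_insert.mp hx with rfl | hx'
          · exact hBs hb
          · exact hAs hx'
        have := hbound _ hins hclique
        rw [Finset.card_insert_of_notMem hbA, hAcard] at this
        omega
      -- decomposition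
      have hsAB : s = A ∪ B := by
        rw [hB, Finset.union_sdiff_of_subset hAs]
      have hdecomp : ((s ×ˢ s).filter fun p => R p.1 p.2).card ≤
          ((A ×ˢ A).filter fun p => R p.1 p.2).card +
          ((A ×ˢ B).filter fun p => R p.1 p.2).card +
          ((B ×ˢ A).filter fun p => R p.1 p.2).card +
          ((B ×ˢ B).filter fun p => R p.1 p.2).card := by
        conv_lhs => rw [hsAB]
        rw [Finset.union_product, Finset.product_union, Finset.product_union,
          Finset.filter_union, Finset.filter_union, Finset.filter_union]
        refine le_trans (Finset.card_union_le _ _) ?_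
        have h1 := Finset.card_union_le ((A ×ˢ A).filter fun p => R p.1 p.2)
          ((A ×ˢ B).filter fun p => R p.1 p.2)
        have h2 := Finset.card_union_le ((B ×ˢ A).filter fun p => R p.1 p.2)
          ((B ×ˢ B).filter fun p => R p.1 p.2)
        omega
      -- within A
      have hAA : ((A ×ˢ A).filter fun p => R p.1 p.2).card ≤ (r + 1) * r := by
        have hsub : ((A ×ˢ A).filter fun p => R p.1 p.2) ⊆ A.offDiag := by
          intro p hp
          simp only [Finset.mem_filter, Finset.mem_product] at hp
          exact Finset.mem_offDiag.mpr ⟨hp.1.1, hp.1.2,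
            fun h => hirr p.2 (h ▸ hp.2)⟩
        have := Finset.card_le_card hsub
        rw [Finset.offDiag_card, hAcard] at this
        have hexp : (r + 1) * (r + 1) = (r + 1) * r + (r + 1) := by ring
        omega
      -- cross pairs
      have hAB : ((A ×ˢ B).filter fun p => R p.1 p.2).card ≤ r * B.card := by
        have hsub : ((A ×ˢ B).filter fun p => R p.1 p.2) ⊆
            B.biUnion fun b => (A.filter fun a => R a b).image fun a => (a, b) := by
          intro p hp
          simp only [Finset.mem_filter, Finset.mem_product] at hp
          refine Finset.mem_biUnion.mpr ⟨p.2, hp.1.2, Finset.mem_image.mpr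
            ⟨p.1, Finset.mem_filter.mpr ⟨hp.1.1, hp.2⟩, rfl⟩⟩
        refine le_trans (Finset.card_le_card hsub) ?_
        refine le_trans (Finset.card_biUnion_le) ?_
        calc ∑ b ∈ B, ((A.filter fun a => R a b).image fun a => (a, b)).card
            ≤ ∑ b ∈ B, r := Finset.sum_le_sum fun b hb =>
              le_trans Finset.card_image_le (hcross b hb)
          _ = r * B.card := by rw [Finset.sum_const, smul_eq_mul, mul_comm]
      have hBA : ((B ×ˢ A).filter fun p => R p.1 p.2).card ≤ r * B.card := by
        have hsub : ((B ×ˢ A).filter fun p => R p.1 p.2) ⊆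
            B.biUnion fun b => (A.filter fun a => R a b).image fun a => (b, a) := by
          intro p hp
          simp only [Finset.mem_filter, Finset.mem_product] at hp
          refine Finset.mem_biUnion.mpr ⟨p.1, hp.1.1, Finset.mem_image.mpr
            ⟨p.2, Finset.mem_filter.mpr ⟨hp.1.2, hsym _ _ hp.2⟩, rfl⟩⟩
        refine le_trans (Finset.card_le_card hsub) ?_
        refine le_trans (Finset.card_biUnion_le) ?_
        calc ∑ b ∈ B, ((A.filter fun a => R a b).image fun a => (b, a)).card
            ≤ ∑ b ∈ B, r := Finset.sum_le_sum fun b hb =>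
              le_trans Finset.card_image_le (hcross b hb)
          _ = r * B.card := by rw [Finset.sum_const, smul_eq_mul, mul_comm]
      -- within B: inner induction
      have hBB : (r + 1) * ((B ×ˢ B).filter fun p => R p.1 p.2).card ≤ r * B.card ^ 2 := by
        have hbound' : ∀ t : Finset α, t ⊆ B →
            (∀ i ∈ t, ∀ j ∈ t, i ≠ j → R i j) → t.card ≤ r + 1 :=
          fun t hts hcl => hbound t (hts.trans hBs) hcl
        simpa using ih B hBss hbound'
      -- final arithmetic
      set E := ((s ×ˢ s).filter fun p => R p.1 p.2).card
      set EB := ((B ×ˢ B).filter fun p => R p.1 p.2).card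
      set m := B.card
      have hgoal : (r + 1) * E ≤ r * (m + (r + 1)) ^ 2 := by nlinarith
      rw [hscard]
      simpa using hgoal
    · -- no (r+1)-clique
      have hbound' : ∀ t : Finset α, t ⊆ s →
          (∀ i ∈ t, ∀ j ∈ t, i ≠ j → R i j) → t.card ≤ r := by
        intro t hts hcl
        have h1 := hbound t hts hcl
        rcases Nat.lt_or_ge t.card (r + 1) with h | h
        · omega
        · exact absurd ⟨t, hts, by omega, hcl⟩ hA
      rcases Nat.eq_zero_or_pos r with rfl | hrpos
      · have hs : s = ∅ := by
          by_contra h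
          obtain ⟨a, ha⟩ := Finset.nonempty_of_ne_empty h
          have := hbound' {a} (Finset.singleton_subset_iff.mpr ha)
            (by intro i hi j hj hij
                simp only [Finset.mem_singleton] at hi hj
                exact absurd (hi.trans hj.symm) hij)
          simp at this
        subst hs
        simp
      · have h1 := IH s hbound'
        have h2 : ((s ×ˢ s).filter fun p => R p.1 p.2).card ≤ s.card ^ 2 := by
          refine le_trans (Finset.card_le_card (Finset.filter_subset _ _)) ?_
          rw [Finset.card_product, sq]
        obtain ⟨r', rfl⟩ : ∃ r', r = r' + 1 := ⟨r - 1, by omega⟩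
        simp only [Nat.add_sub_cancel] at h1 ⊢
        nlinarith

/-- Given `n` vectors of negative Minkowski norm in `ℝ^{1,T}` (`T ≥ 1`),
the number of ordered pairs `(i, j)` with `i ≠ j` and `⟨v_i, v_j⟩ ≠ 0` is
at least `n²/T − n`.  (Orthogonality gives no `(T+1)`-clique, so Turán's
theorem bounds the number of orthogonal pairs.) -/
theorem nonorthogonal_pairs_lower_bound
    (T : ℕ) (hT : 1 ≤ T) (n : ℕ) (hn : 1 ≤ n)
    (v : Fin n → Fin (T + 1) → ℝ)
    (hneg : ∀ i, mink T (v i) (v i) < 0) :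
    (n : ℝ) ^ 2 / T - n ≤
      ((Finset.univ.filter fun p : Fin n × Fin n =>
        p.1 ≠ p.2 ∧ mink T (v p.1) (v p.2) ≠ 0).card : ℝ) := by
  set R : Fin n → Fin n → Prop := fun i j => i ≠ j ∧ mink T (v i) (v j) = 0 with hR
  have hsym : ∀ a b, R a b → R b a := by
    intro a b ⟨hab, hm⟩
    refine ⟨hab.symm, ?_⟩
    rw [← hm]
    simp only [mink]
    rw [mul_comm]
    congr 1
    exact Finset.sum_congr rfl fun k _ => mul_comm _ _
  have hirr : ∀ a, ¬ R a a := fun a h => h.1 rfl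
  -- clique bound from the geometric lemma
  have hbound : ∀ t : Finset (Fin n), t ⊆ Finset.univ →
      (∀ i ∈ t, ∀ j ∈ t, i ≠ j → R i j) → t.card ≤ T := by
    intro t _ hcl
    by_contra h
    push_neg at h
    have hcardt : T < Fintype.card ↥t := by
      rwa [Fintype.card_coe]
    refine no_orth_family T hcardt (fun x : ↥t => v x.1) (fun x => hneg x.1) ?_
    intro x y hxy
    have hne : x.1 ≠ y.1 := fun hc => hxy (Subtype.ext hc)
    exact (hcl x.1 x.2 y.1 y.2 hne).2
  have htur := turan_count R hsym hirr T Finset.univ hbound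
  rw [Finset.filter_congr_decidable] at htur
  -- counting identities
  set D : Finset (Fin n × Fin n) := Finset.univ.filter fun p => p.1 ≠ p.2 with hD
  have hDcard : D.card = n * n - n := by
    have : D = (Finset.univ : Finset (Fin n)).offDiag := by
      ext p
      simp [hD, Finset.mem_offDiag]
    rw [this, Finset.offDiag_card, Finset.card_univ, Fintype.card_fin]
  set O := ((Finset.univ ×ˢ Finset.univ :
      Finset (Fin n × Fin n)).filter fun p => R p.1 p.2).card with hO
  set N := ((Finset.univ.filter fun p : Fin n × Fin n =>
        p.1 ≠ p.2 ∧ mink T (v p.1) (v p.2) ≠ 0).card) with hN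
  have hsplit : O + N = n * n - n := by
    have hO' : (Finset.univ ×ˢ Finset.univ :
        Finset (Fin n × Fin n)).filter (fun p => R p.1 p.2)
        = D.filter fun p => mink T (v p.1) (v p.2) = 0 := by
      ext p
      simp only [hR, hD, Finset.mem_filter, Finset.mem_product, Finset.mem_univ]
      tauto
    have hN' : (Finset.univ.filter fun p : Fin n × Fin n =>
        p.1 ≠ p.2 ∧ mink T (v p.1) (v p.2) ≠ 0)
        = D.filter fun p => ¬ (mink T (v p.1) (v p.2) = 0) := by
      ext p
      simp only [hD, Finset.mem_filter, Finset.mem_univ]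
      tauto
    rw [hO, hN, hO', hN', ← hDcard]
    exact Finset.card_filter_add_card_filter_not _
  have hcardU : (Finset.univ : Finset (Fin n)).card = n := by simp
  rw [hcardU] at htur
  -- pass to the reals
  have hTpos : (0:ℝ) < T := by positivity
  have hc1 : (T : ℝ) * O ≤ ((T : ℝ) - 1) * (n : ℝ) ^ 2 := by
    have := htur
    have hcast : (((T - 1) : ℕ) : ℝ) = (T : ℝ) - 1 := by
      rw [Nat.cast_sub hT]; simp
    calc (T : ℝ) * O = ((T * O : ℕ) : ℝ) := by push_cast; ring
      _ ≤ (((T - 1) * n ^ 2 : ℕ) : ℝ) := by rw [hO]; exact_mod_cast this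
      _ = ((T : ℝ) - 1) * (n : ℝ) ^ 2 := by push_cast [Nat.cast_sub hT]; ring
  have hc2 : (O : ℝ) + N = (n : ℝ) * n - n := by
    have hle : n ≤ n * n := Nat.le_mul_of_pos_left n hn
    calc (O : ℝ) + N = ((O + N : ℕ) : ℝ) := by push_cast; ring
      _ = ((n * n - n : ℕ) : ℝ) := by rw [hsplit]
      _ = (n : ℝ) * n - n := by rw [Nat.cast_sub hle]; push_cast; ring
  rw [sub_le_iff_le_add, div_le_iff₀ hTpos]
  nlinarith [hc1, hc2]
end

section
/- Let T ≥ 0 and let a, b₁, b₂ ∈ ℝ^{1,T} satisfy ⟨a,a⟩ > 0, ⟨a,b₁⟩ = ⟨a,b₂⟩ = 0, ⟨b₁,b₁⟩ = ⟨b₂,b₂⟩ = −2 and ⟨b₁,b₂⟩ = 2. Then b₂ = −b₁, and consequently there exists no j ∈ ℝ^{1,T} with ⟨j,b₁⟩ > 0 and ⟨j,b₂⟩ > 0. -/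
lemma mink_null (T : ℕ) (a s : Fin (T + 1) → ℝ)
    (haa : 0 < mink T a a) (has : mink T a s = 0) (hss : mink T s s = 0) :
    s = 0 := by
  set A := ∑ i : Fin T, a i.succ * a i.succ with hA
  set S := ∑ i : Fin T, s i.succ * s i.succ with hS
  have hAnn : A < a 0 * a 0 := by
    have := haa; unfold mink at this; linarith
  have hasum : a 0 * s 0 = ∑ i : Fin T, a i.succ * s i.succ := by
    unfold mink at has; linarith
  have hs0 : s 0 * s 0 = S := by
    unfold mink at hss; linarith
  have hSnn : 0 ≤ S := Finset.sum_nonneg fun i _ => mul_self_nonneg _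
  have hcs : (∑ i : Fin T, a i.succ * s i.succ) ^ 2 ≤ A * S := by
    have := Finset.sum_mul_sq_le_sq_mul_sq Finset.univ
      (fun i : Fin T => a i.succ) (fun i : Fin T => s i.succ)
    simpa [hA, hS, sq] using this
  have hS0 : S = 0 := by
    by_contra h
    have hSpos : 0 < S := lt_of_le_of_ne hSnn (Ne.symm h)
    have h1 : (a 0 * s 0) ^ 2 ≤ A * S := hasum ▸ hcs
    have h2 : A * S < (a 0 * a 0) * S := by
      have hA0 : 0 ≤ A := Finset.sum_nonneg fun i _ => mul_self_nonneg _
      exact mul_lt_mul_of_pos_right hAnn hSpos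
    nlinarith [hs0, sq_nonneg (a 0 * s 0)]
  have hsi : ∀ i : Fin T, s i.succ = 0 := by
    intro i
    have := (Finset.sum_eq_zero_iff_of_nonneg
      (fun j _ => mul_self_nonneg (s j.succ))).1 (hS ▸ hS0) i (Finset.mem_univ i)
    exact mul_self_eq_zero.1 this
  have hs00 : s 0 = 0 := by
    have : s 0 * s 0 = 0 := by rw [hs0, hS0]
    exact mul_self_eq_zero.1 this
  funext i
  rcases Fin.eq_zero_or_eq_succ i with h | ⟨j, rfl⟩
  · simp [h, hs00]
  · simp [hsi j]

/-- The `SU(N) × SU(N)` infinite family of Schwarz is ruled out for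
`a² > 0` (i.e. `T < 9`): the anomaly inner products force `b₂ = −b₁`, so no
vector `j` can satisfy the gauge kinetic term sign conditions for both
factors. -/
theorem schwarz_family_ruled_out
    (T : ℕ) (a b₁ b₂ : Fin (T + 1) → ℝ)
    (haa : 0 < mink T a a)
    (hab₁ : mink T a b₁ = 0) (hab₂ : mink T a b₂ = 0)
    (hb₁ : mink T b₁ b₁ = -2) (hb₂ : mink T b₂ b₂ = -2)
    (hb₁₂ : mink T b₁ b₂ = 2) :
    b₂ = -b₁ ∧ ¬ ∃ j : Fin (T + 1) → ℝ, 0 < mink T j b₁ ∧ 0 < mink T j b₂ := by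
  have hadd : ∀ x y z : Fin (T + 1) → ℝ,
      mink T x (y + z) = mink T x y + mink T x z := by
    intro x y z
    simp only [mink, Pi.add_apply, mul_add]
    rw [Finset.sum_add_distrib]
    ring
  have hcomm : ∀ x y : Fin (T + 1) → ℝ, mink T x y = mink T y x := by
    intro x y
    simp only [mink, mul_comm]
  have hss : mink T (b₁ + b₂) (b₁ + b₂) = 0 := by
    rw [hadd, hcomm (b₁ + b₂) b₁, hcomm (b₁ + b₂) b₂, hadd, hadd, hcomm b₂ b₁]
    linarith
  have has : mink T a (b₁ + b₂) = 0 := by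
    rw [hadd]; linarith
  have hzero := mink_null T a (b₁ + b₂) haa has hss
  have hb2 : b₂ = -b₁ := by
    funext i
    have := congrFun hzero i
    simp only [Pi.add_apply, Pi.zero_apply] at this
    simp [Pi.neg_apply]; linarith
  refine ⟨hb2, ?_⟩
  rintro ⟨j, hj1, hj2⟩
  have : mink T j b₂ = -mink T j b₁ := by
    rw [hb2]; simp only [mink, Pi.neg_apply, mul_neg, Finset.sum_neg_distrib]; ring
  linarith
end

section
/- Let N ≥ 25 be an integer. Then the nonnegative integer solutions (x₁, x₂, x₃, x₄) of the equation 2N = x₁ + 2N·x₂ + (N−8)·x₃ + (N+8)·x₄ are exactly the six tuples (2N, 0, 0, 0), (0, 1, 0, 0), (N+8, 0, 1, 0), (16, 0, 2, 0), (N−8, 0, 0, 1), and (0, 0, 1, 1). -/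
/-- For `N ≥ 25`, the nonnegative integer solutions of the `SU(N)` quartic
anomaly cancellation condition `2N = x₁ + 2N x₂ + (N−8) x₃ + (N+8) x₄`
are exactly the six tuples `(2N,0,0,0)`, `(0,1,0,0)`, `(N+8,0,1,0)`,
`(16,0,2,0)`, `(N−8,0,0,1)`, `(0,0,1,1)`. -/
theorem su_n_quartic_anomaly_solutions
    (N : ℤ) (hN : 25 ≤ N) (x₁ x₂ x₃ x₄ : ℤ)
    (h₁ : 0 ≤ x₁) (h₂ : 0 ≤ x₂) (h₃ : 0 ≤ x₃) (h₄ : 0 ≤ x₄) :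
    2 * N = x₁ + 2 * N * x₂ + (N - 8) * x₃ + (N + 8) * x₄ ↔
      (x₁, x₂, x₃, x₄) = (2 * N, 0, 0, 0) ∨
      (x₁, x₂, x₃, x₄) = (0, 1, 0, 0) ∨
      (x₁, x₂, x₃, x₄) = (N + 8, 0, 1, 0) ∨
      (x₁, x₂, x₃, x₄) = (16, 0, 2, 0) ∨
      (x₁, x₂, x₃, x₄) = (N - 8, 0, 0, 1) ∨
      (x₁, x₂, x₃, x₄) = (0, 0, 1, 1) := by
  constructor
  · intro h
    have hb2 : x₂ ≤ 1 := by nlinarith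
    have hb3 : x₃ ≤ 2 := by nlinarith
    have hb4 : x₄ ≤ 1 := by nlinarith
    interval_cases x₂ <;> interval_cases x₃ <;> interval_cases x₄ <;>
      simp only [Prod.mk.injEq, and_true, true_and] <;> omega
  · rintro (h | h | h | h | h | h) <;>
      (injection h with a h; injection h with b h; injection h with c d;
       subst a b c d; ring)
end

section
/- Let N ≥ 9 be an integer. The solutions in integers k ≥ 1, A ≥ 0, F ≥ 0 of the system 2N = F + A·(N−8), 3k = A, k² = A − 2 are exactly: (k, A, F) = (1, 3, 24−N), which exists if and only if N ≤ 24, and (k, A, F) = (2, 6, 48−4N), which exists if and only if N ≤ 12. -/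
/-- For `N ≥ 9`, the solutions in integers `k ≥ 1`, `A ≥ 0`, `F ≥ 0` of the
`T = 0`, gauge group `SU(N)` anomaly cancellation system
`2N = F + A(N−8)`, `3k = A`, `k² = A − 2` are exactly
`(k,A,F) = (1,3,24−N)` (which requires `N ≤ 24`) and
`(k,A,F) = (2,6,48−4N)` (which requires `N ≤ 12`). -/
theorem t0_su_n_anomaly_solutions
    (N : ℤ) (hN : 9 ≤ N) (k A F : ℤ)
    (hk : 1 ≤ k) (hA : 0 ≤ A) (hF : 0 ≤ F) :
    (2 * N = F + A * (N - 8) ∧ 3 * k = A ∧ k ^ 2 = A - 2) ↔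
      ((k, A, F) = (1, 3, 24 - N) ∧ N ≤ 24) ∨
      ((k, A, F) = (2, 6, 48 - 4 * N) ∧ N ≤ 12) := by
  constructor
  · rintro ⟨h1, h2, h3⟩
    have hkq : k ^ 2 = 3 * k - 2 := by omega
    have : (k - 1) * (k - 2) = 0 := by ring_nf; nlinarith [hkq]
    have hk12 : k = 1 ∨ k = 2 := by
      rcases mul_eq_zero.mp this with h | h
      · left; omega
      · right; omega
    rcases hk12 with rfl | rfl
    · left
      have hA3 : A = 3 := by omega
      subst hA3
      have hF' : F = 24 - N := by linarith
      subst hF'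
      constructor
      · rfl
      · omega
    · right
      have hA6 : A = 6 := by omega
      subst hA6
      have hF' : F = 48 - 4 * N := by linarith
      subst hF'
      constructor
      · rfl
      · omega
  · rintro (⟨h, hN24⟩ | ⟨h, hN12⟩) <;>
      (simp only [Prod.mk.injEq] at h; obtain ⟨hk1, hA1, hF1⟩ := h;
       subst hk1; subst hA1; subst hF1; refine ⟨by ring, by ring, by ring⟩)
end

section
/- Equip ℤ² with the hyperbolic bilinear form given by the Gram matrix Ω = [[0,1],[1,0]], and set a = (−2,−2) and b₈ = (1,−6), so that ⟨a,a⟩ = 8, ⟨−a, b₈⟩ = −10 and ⟨b₈,b₈⟩ = −12. Then the unique pair (b₇, F) with b₇ ∈ ℤ² and F ∈ ℤ satisfying ⟨−a, b₇⟩ = 2F − 6, ⟨b₇, b₇⟩ = 2F − 8, and ⟨b₇, b₈⟩ = 0 is b₇ = (1, 6) and F = 10. -/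
/-- The hyperbolic bilinear form on `ℤ²` with Gram matrix `Ω = [[0,1],[1,0]]`:
`⟨x, y⟩ = x₁ y₂ + x₂ y₁`. -/
def hypForm (x y : ℤ × ℤ) : ℤ := x.1 * y.2 + x.2 * y.1

/-- In the hyperbolic lattice, with `a = (−2,−2)` and `b₈ = (1,−6)` (so that
`⟨a,a⟩ = 8`, `⟨−a,b₈⟩ = −10`, `⟨b₈,b₈⟩ = −12`), the unique pair `(b₇, F)`
satisfying the `E₇` anomaly conditions `⟨−a,b₇⟩ = 2F − 6`, `⟨b₇,b₇⟩ = 2F − 8`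
and `⟨b₇,b₈⟩ = 0` is `b₇ = (1,6)`, `F = 10`. -/
theorem e8_e7_anomaly_unique_solution :
    hypForm (-2, -2) (-2, -2) = 8 ∧
    hypForm (2, 2) (1, -6) = -10 ∧
    hypForm (1, -6) (1, -6) = -12 ∧
    ∀ (b₇ : ℤ × ℤ) (F : ℤ),
      (hypForm (2, 2) b₇ = 2 * F - 6 ∧
       hypForm b₇ b₇ = 2 * F - 8 ∧
       hypForm b₇ (1, -6) = 0) ↔
      (b₇ = (1, 6) ∧ F = 10) := by
  refine ⟨rfl, rfl, rfl, ?_⟩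
  rintro ⟨x, y⟩ F
  simp only [hypForm, Prod.mk.injEq]
  constructor
  · rintro ⟨h1, h2, h3⟩
    have hy : y = 6 * x := by linarith
    subst hy
    have hx : (x - 1) * (6 * x - 1) = 0 := by nlinarith
    rcases mul_eq_zero.mp hx with h | h
    · have : x = 1 := by linarith
      subst this
      refine ⟨⟨rfl, by ring⟩, by linarith⟩
    · omega
  · rintro ⟨⟨hx, hy⟩, hF⟩
    subst hx hy hF
    norm_num
end

section
/- There do not exist a symmetric 2×2 integer matrix M with det M = ±1 and vectors a, b ∈ ℤ² such that aᵀMa = 8, aᵀMb = 10, and bᵀMb = 10. Equivalently, the rank-2 integral lattice with Gram matrix [[8,10],[10,10]] admits no embedding into any unimodular lattice of rank 2. -/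
/-!
The Gram matrix of `a, b` with respect to `M` is `P M Pᵀ`, where `P` has rows `a` and `b`, so its
determinant `8 * 10 - 10 * 10 = -20` equals `(det P)² * det M = ±(det P)²`. But neither `20` nor
`-20` is the square of an integer.
-/

namespace Matrix

variable {n ι R : Type*} [Fintype n]

def bilinGram [CommSemiring R] (M : Matrix n n R) (v : ι → n → R) : Matrix ι ι R :=
  of fun i j => v i ⬝ᵥ M *ᵥ v j

theorem bilinGram_eq_mul [CommSemiring R] [Fintype ι] (M : Matrix n n R) (v : ι → n → R) :
    bilinGram M v = of v * M * (of v)ᵀ := by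
  ext i j
  rw [Matrix.mul_assoc, mul_apply']
  rfl

theorem det_bilinGram [CommRing R] [DecidableEq n] (M : Matrix n n R) (v : n → n → R) :
    (bilinGram M v).det = (of v).det ^ 2 * M.det := by
  rw [bilinGram_eq_mul, det_mul, det_mul, det_transpose]
  ring

theorem IsSymm.dotProduct_mulVec_comm [CommSemiring R] {M : Matrix n n R} (hM : M.IsSymm)
    (v w : n → R) : w ⬝ᵥ M *ᵥ v = v ⬝ᵥ M *ᵥ w := by
  rw [dotProduct_comm, ← vecMul_transpose, hM.eq, dotProduct_mulVec]

end Matrix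

open Matrix

theorem Int.not_isSquare_twenty : ¬ IsSquare (20 : ℤ) := by
  decide +kernel

/-- The rank-2 integral lattice with Gram matrix `[[8,10],[10,10]]` admits no
embedding into any unimodular lattice of rank 2: there are no symmetric
integer `2×2` matrix `M` with `det M = ±1` and vectors `a, b ∈ ℤ²` with
`aᵀMa = 8`, `aᵀMb = 10`, `bᵀMb = 10`. -/
theorem no_unimodular_embedding_of_su4_anomaly_lattice :
    ¬ ∃ (M : Matrix (Fin 2) (Fin 2) ℤ) (a b : Fin 2 → ℤ),
        M.IsSymm ∧ (M.det = 1 ∨ M.det = -1) ∧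
        dotProduct a (M.mulVec a) = 8 ∧
        dotProduct a (M.mulVec b) = 10 ∧
        dotProduct b (M.mulVec b) = 10 := by
  rintro ⟨M, a, b, hM, hdet, haa, hab, hbb⟩
  have hgram : bilinGram M ![a, b] = !![8, 10; 10, 10] := by
    ext i j
    fin_cases i <;> fin_cases j
    exacts [haa, hab, (hM.dotProduct_mulVec_comm a b).trans hab, hbb]
  have hdet_gram := det_bilinGram M ![a, b]
  rw [hgram, det_fin_two_of] at hdet_gram
  set d := (of ![a, b]).det
  rcases hdet with h | h <;> rw [h] at hdet_gram
  · nlinarith [sq_nonneg d]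
  · exact Int.not_isSquare_twenty ⟨d, by linarith⟩
end
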